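/- Green function of the d-regular tree: Let d ≥ 2 be an integer, p > 1, and let 𝕋_d be the d-regular tree with standard weights and m ≡ 1, rooted at o. Then ∂_bB_k(o) = d^{k+1} for all k ≥ 0, the p-Laplacian Δ_p on 𝕋_d is subcritical, and its minimal positive Green function with pole o is G₀(x) = d^{-(|x|+1)/(p-1)} / (1 − d^{-1/(p-1)}), i.e., G₀(x) = C_{p,d}·d^{-|x|/(p-1)} with C_{p,d} = d^{-1/(p-1)}/(1 − d^{-1/(p-1)}). -/

import Mathlib

open Real Filter

noncomputable section

attribute [local instance] Classical.propDecidable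

/-- Signed power `a^⟨r⟩ = |a|^(r-1)·a`, with `0^⟨r⟩ = 0`. -/
def spow (r a : ℝ) : ℝ := if a = 0 then 0 else |a| ^ (r - 1) * a

/-- `b` is a (weighted, row-summable) graph over `X`. -/
def IsGraph {X : Type*} (b : X → X → ℝ) : Prop :=
  (∀ x y, 0 ≤ b x y) ∧ (∀ x y, b x y = b y x) ∧ (∀ x, b x x = 0) ∧
    ∀ x, Summable fun y => b x y

/-- Connectedness: any two vertices are joined by a path of positive-weight edges. -/
def GraphConnected {X : Type*} (b : X → X → ℝ) : Prop :=
  ∀ x y, Relation.ReflTransGen (fun u v => 0 < b u v) x y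

/-- Membership in `F_b(X)`. -/
def inF {X : Type*} (p : ℝ) (b : X → X → ℝ) (f : X → ℝ) : Prop :=
  ∀ x, Summable fun y => b x y * |f x - f y| ^ (p - 1)

/-- The weighted `p`-Laplacian. -/
def pLap {X : Type*} (p : ℝ) (b : X → X → ℝ) (m : X → ℝ) (f : X → ℝ) (x : X) : ℝ :=
  (1 / m x) * ∑' y, b x y * spow (p - 1) (f x - f y)

/-- The quasilinear Schrödinger operator `H = Δ_p + V`. -/
def schrodOp {X : Type*} (p : ℝ) (b : X → X → ℝ) (m V : X → ℝ) (f : X → ℝ) (x : X) : ℝ :=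
  pLap p b m f x + V x * spow (p - 1) (f x)

/-- The energy functional `Q_{p,b,m,V}`. -/
def pEnergy {X : Type*} (p : ℝ) (b : X → X → ℝ) (m V : X → ℝ) (φ : X → ℝ) : ℝ :=
  (1 / 2) * (∑' z : X × X, b z.1 z.2 * |φ z.1 - φ z.2| ^ p)
    + ∑' x, m x * V x * |φ x| ^ p

/-- Positivity of `H`: existence of a positive `H`-superharmonic function. -/
def IsPositiveOp {X : Type*} (p : ℝ) (b : X → X → ℝ) (m V : X → ℝ) : Prop :=
  ∃ w : X → ℝ, inF p b w ∧ (∀ x, 0 ≤ w x) ∧ w ≠ 0 ∧ ∀ x, 0 ≤ schrodOp p b m V w x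

/-- Subcriticality of the energy functional. -/
def pSubcritical {X : Type*} (p : ℝ) (b : X → X → ℝ) (m V : X → ℝ) : Prop :=
  ∃ W : X → ℝ, (∀ x, 0 ≤ W x) ∧ W ≠ 0 ∧
    ∀ φ : X → ℝ, (Function.support φ).Finite →
      0 ≤ pEnergy p b m (fun x => V x - W x) φ

/-- Criticality: the energy functional is nonnegative but not subcritical. -/
def pCritical {X : Type*} (p : ℝ) (b : X → X → ℝ) (m V : X → ℝ) : Prop :=
  (∀ φ : X → ℝ, (Function.support φ).Finite → 0 ≤ pEnergy p b m V φ) ∧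
    ¬ pSubcritical p b m V

/-- `v` is an Agmon ground state: strictly positive, harmonic, and every positive
superharmonic function is a positive multiple of it. -/
def IsAgmonGroundState {X : Type*} (p : ℝ) (b : X → X → ℝ) (m V : X → ℝ)
    (v : X → ℝ) : Prop :=
  (∀ x, 0 < v x) ∧ inF p b v ∧ (∀ x, schrodOp p b m V v x = 0) ∧
    ∀ w : X → ℝ, inF p b w → (∀ x, 0 ≤ w x) → w ≠ 0 →
      (∀ x, 0 ≤ schrodOp p b m V w x) → ∃ c : ℝ, 0 < c ∧ ∀ x, w x = c * v x

/-- `G` is the minimal positive Green function of `Δ_p + α` with pole `o`. -/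
def IsGreenFunction {X : Type*} (p : ℝ) (b : X → X → ℝ) (m : X → ℝ) (α : ℝ)
    (o : X) (G : X → ℝ) : Prop :=
  (∀ x, 0 < G x) ∧ inF p b G ∧
    (∀ x, schrodOp p b m (fun _ => α) G x = if x = o then 1 else 0) ∧
    ∀ φ : X → ℝ, inF p b φ → (∀ x, 0 < φ x) →
      (∀ x, schrodOp p b m (fun _ => α) φ x = if x = o then 1 else 0) →
      ∀ x, G x ≤ φ x

/-- `u` is a positive solution of `H[u] = 0` of minimal growth at infinity. -/
def PositiveMinimalGrowth {X : Type*} (p : ℝ) (b : X → X → ℝ) (m V : X → ℝ)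
    (u : X → ℝ) : Prop :=
  (∀ x, 0 < u x) ∧ inF p b u ∧
    ∃ K₀ : Set X, K₀.Finite ∧ (∀ x ∉ K₀, schrodOp p b m V u x = 0) ∧
      ∀ K : Set X, K.Finite → K₀ ⊆ K →
        ∀ v : X → ℝ, inF p b v → (∀ x, 0 < v x) →
          (∀ x ∉ K, 0 ≤ schrodOp p b m V v x) → (∀ x ∈ K, u x ≤ v x) →
          ∀ x ∉ K, u x ≤ v x

/-- Combinatorial graph distance from `o` to `x`. -/
def gdist {X : Type*} (b : X → X → ℝ) (o x : X) : ℕ :=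
  sInf {n : ℕ | ∃ w : ℕ → X, w 0 = o ∧ w n = x ∧ ∀ i < n, 0 < b (w i) (w (i + 1))}

/-- Total edge weight `∂_b B_k(o)` between the spheres of radii `k` and `k+1`. -/
def sphereBoundary {X : Type*} (b : X → X → ℝ) (o : X) (k : ℕ) : ℝ :=
  ∑' z : X × X, if gdist b o z.1 = k ∧ gdist b o z.2 = k + 1 then b z.1 z.2 else 0

/-- Model graph: the inner and outer curvatures are spherically symmetric. -/
def IsModelGraph {X : Type*} (b : X → X → ℝ) (m : X → ℝ) (o : X) : Prop :=
  ∀ x y, gdist b o x = gdist b o y →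
    ((1 / m x) * (∑' z, if gdist b o z = gdist b o x + 1 then b x z else 0)
        = (1 / m y) * (∑' z, if gdist b o z = gdist b o y + 1 then b y z else 0)) ∧
    ((1 / m x) * (∑' z, if gdist b o z + 1 = gdist b o x then b x z else 0)
        = (1 / m y) * (∑' z, if gdist b o z + 1 = gdist b o y then b y z else 0))

/-- The Green function of a subcritical model graph:
`G₀(x) = ∑_{k=|x|}^∞ (m(o)/∂_bB_k(o))^{1/(p-1)}`. -/
def modelGreen {X : Type*} (p : ℝ) (b : X → X → ℝ) (m : X → ℝ) (o : X) (x : X) : ℝ :=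
  ∑' k : ℕ, (m o / sphereBoundary b o (gdist b o x + k)) ^ (1 / (p - 1))

/-- The `d`-regular tree with standard weights, root `o` and distance function `ℓ`. -/
def IsRegularTree {X : Type*} (d : ℕ) (b : X → X → ℝ) (o : X) (ℓ : X → ℕ) : Prop :=
  (∀ x y, b x y = b y x) ∧ (∀ x, b x x = 0) ∧ (∀ x y, b x y = 0 ∨ b x y = 1) ∧
    ℓ o = 0 ∧
    (∀ x, {y | b x y = 1 ∧ ℓ y = ℓ x + 1}.ncard = d) ∧
    (∀ x, x ≠ o → {y | b x y = 1 ∧ ℓ y + 1 = ℓ x}.ncard = 1) ∧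
    (∀ x y, b x y = 1 → ℓ y = ℓ x + 1 ∨ ℓ x = ℓ y + 1)

/-- The simplified energy functional `E_u(φ)`. -/
def simpEnergy {X : Type*} (p : ℝ) (b : X → X → ℝ) (u φ : X → ℝ) : ℝ :=
  ∑' z : X × X,
    b z.1 z.2 * (u z.1 * u z.2) * |φ z.1 - φ z.2| ^ 2 *
      (|u z.1 - u z.2| * ((|φ z.1| + |φ z.2|) / 2)
        + (u z.1 * u z.2) ^ ((1 : ℝ) / 2) * |φ z.1 - φ z.2|) ^ (p - 2)

/-!
Put `q = d^{-1/(p-1)}` and `G(x) = q^{|x|+1}/(1-q)`. From `x` to each of its `d` children `G` drops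
by `q^{|x|+1}`, which carries the flux `d^{-(|x|+1)}`; the outgoing fluxes add up to the incoming
one `d^{-|x|}`, and to `1` at the root, i.e. `Δ_p G = 1_o`.

A positive solution `φ` of `Δ_p φ = 1_o` also conserves flux away from `o`. If the flux `t^{p-1}`
leaves `x`, repeatedly following a child that receives at least a `1/d` share shows that `φ` drops
by at least `t q, t q², …` along a ray, so `φ(x) ≥ t q/(1-q)` by positivity. An induction on `|x|`
then gives `φ ≥ G`, i.e. `G` is minimal.

Subcriticality is a Hardy inequality at the root: the spherical means `d^{-k} ∑_{|x|=k} φ(x)`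
telescope to `φ(o) = ∑_{x ≠ o} d^{-|x|} (φ(parent x) - φ(x))`, and the weighted Hölder inequality
with weights `(q/d)^{|x|}` bounds `|φ(o)|^p` by `G(o)^{p-1}` times the energy.
-/

open Finset

lemma spow_of_pos {r a : ℝ} (ha : 0 < a) : spow r a = a ^ r := by
  rw [spow, if_neg ha.ne', abs_of_pos ha, Real.rpow_sub_one ha.ne', div_mul_cancel₀ _ ha.ne']

lemma spow_of_nonneg {r a : ℝ} (hr : r ≠ 0) (ha : 0 ≤ a) : spow r a = a ^ r := by
  rcases ha.eq_or_lt with rfl | ha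
  · rw [spow, if_pos rfl, Real.zero_rpow hr]
  · exact spow_of_pos ha

lemma spow_neg (r a : ℝ) : spow r (-a) = -spow r a := by
  by_cases ha : a = 0
  · simp [spow, ha]
  · rw [spow, spow, if_neg (neg_ne_zero.2 ha), if_neg ha, abs_neg, mul_neg]

lemma spow_mul_of_pos (r a : ℝ) {c : ℝ} (hc : 0 < c) : spow r (a * c) = spow r a * c ^ r := by
  by_cases ha : a = 0
  · simp [spow, ha]
  rw [spow, spow, if_neg (mul_ne_zero ha hc.ne'), if_neg ha, abs_mul, abs_of_pos hc,
    Real.mul_rpow (abs_nonneg a) hc.le, Real.rpow_sub_one hc.ne' r]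
  field_simp

lemma spow_strictMono {r : ℝ} (hr : 0 < r) : StrictMono (spow r) :=
  strictMono_of_odd_strictMonoOn_nonneg (spow_neg r) fun a ha b hb hab => by
    rw [spow_of_nonneg hr.ne' ha, spow_of_nonneg hr.ne' hb]
    exact Real.rpow_lt_rpow ha hab hr

section GreenRatio

def greenRatio (p : ℝ) (d : ℕ) : ℝ := (d : ℝ) ^ (-(1 : ℝ) / (p - 1))

variable {p : ℝ} {d : ℕ}

lemma greenRatio_pos (hd : 0 < d) : 0 < greenRatio p d :=
  Real.rpow_pos_of_pos (Nat.cast_pos.2 hd) _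

lemma greenRatio_lt_one (hp : 1 < p) (hd : 1 < d) : greenRatio p d < 1 :=
  Real.rpow_lt_one_of_one_lt_of_neg (Nat.one_lt_cast.2 hd) (div_neg_of_neg_of_pos (by norm_num)
    (by linarith))

lemma greenRatio_rpow (hp : p ≠ 1) : greenRatio p d ^ (p - 1) = (d : ℝ)⁻¹ := by
  rw [greenRatio, ← Real.rpow_mul (Nat.cast_nonneg d), div_mul_cancel₀ _ (sub_ne_zero.2 hp),
    Real.rpow_neg_one]

lemma greenRatio_pow_rpow (hp : p ≠ 1) (hd : 0 < d) (n : ℕ) :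
    (greenRatio p d ^ n) ^ (p - 1) = ((d : ℝ) ^ n)⁻¹ := by
  rw [← Real.rpow_pow_comm (greenRatio_pos hd).le, greenRatio_rpow hp, inv_pow]

lemma spow_mul_greenRatio (hp : p ≠ 1) (hd : 0 < d) (t : ℝ) :
    spow (p - 1) (t * greenRatio p d) = spow (p - 1) t / d := by
  rw [spow_mul_of_pos _ _ (greenRatio_pos hd), greenRatio_rpow hp, div_eq_mul_inv]

lemma greenRatio_pow (n : ℕ) : greenRatio p d ^ n = (d : ℝ) ^ (-(n : ℝ) / (p - 1)) := by
  rw [greenRatio, ← Real.rpow_mul_natCast (Nat.cast_nonneg d)]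
  ring_nf

lemma sum_range_greenRatio_pow_le (hp : 1 < p) (hd : 1 < d) (K : ℕ) :
    ∑ k ∈ range K, greenRatio p d ^ (k + 1) ≤ greenRatio p d / (1 - greenRatio p d) := by
  have hq := greenRatio_pos (p := p) (by omega : 0 < d)
  have hq1 := greenRatio_lt_one hp hd
  simp_rw [pow_succ', ← mul_sum, div_eq_mul_inv, ← tsum_geometric_of_lt_one hq.le hq1]
  gcongr
  exact (summable_geometric_of_lt_one hq.le hq1).sum_le_tsum _ fun k _ => by positivity

end GreenRatio

section Flow

variable {X : Type*}

def outflow (p : ℝ) (C : X → Finset X) (φ : X → ℝ) (x : X) : ℝ :=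
  ∑ v ∈ C x, spow (p - 1) (φ x - φ v)

variable {p : ℝ} {d : ℕ} {C : X → Finset X} {φ : X → ℝ}

/-- Some child receives at least the share `1/d` of the flux, so `φ` drops by at least `t q`
towards it (as `(t q)^{p-1} = t^{p-1}/d`), and the flux leaving that child is again at least
`(t q)^{p-1}`. -/
theorem mul_sum_range_le_of_spow_le_outflow (hp : 1 < p) (hd : 0 < d) (hC : ∀ x, #(C x) = d)
    (hφ : ∀ x, 0 ≤ φ x) (hflow : ∀ x, ∀ v ∈ C x, spow (p - 1) (φ x - φ v) ≤ outflow p C φ v)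
    (K : ℕ) {x : X} {t : ℝ} (ht : 0 ≤ t) (hx : spow (p - 1) t ≤ outflow p C φ x) :
    t * greenRatio p d * ∑ k ∈ range K, greenRatio p d ^ k ≤ φ x := by
  induction K generalizing x t with
  | zero => simpa using hφ x
  | succ K ih =>
    set q := greenRatio p d
    have hq : 0 < q := greenRatio_pos hd
    obtain ⟨v, hv, hv_share⟩ : ∃ v ∈ C x, spow (p - 1) t / d ≤ spow (p - 1) (φ x - φ v) := by
      refine exists_le_of_sum_le (card_pos.1 (by rw [hC]; exact hd)) ?_
      rwa [sum_const, hC, nsmul_eq_mul, mul_div_cancel₀ _ (by positivity)]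
    rw [← spow_mul_greenRatio (by linarith) hd] at hv_share
    have hdrop : t * q ≤ φ x - φ v := (spow_strictMono (by linarith)).le_iff_le.1 hv_share
    have hrest := ih (by positivity) (hv_share.trans (hflow x v hv))
    calc t * q * ∑ k ∈ range (K + 1), q ^ k
        = t * q + t * q * q * ∑ k ∈ range K, q ^ k := by
          simp only [sum_range_succ', pow_succ, ← sum_mul]
          ring
      _ ≤ (φ x - φ v) + φ v := add_le_add hdrop hrest
      _ = φ x := sub_add_cancel _ _

theorem mul_div_le_of_spow_le_outflow (hp : 1 < p) (hd : 1 < d) (hC : ∀ x, #(C x) = d)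
    (hφ : ∀ x, 0 ≤ φ x) (hflow : ∀ x, ∀ v ∈ C x, spow (p - 1) (φ x - φ v) ≤ outflow p C φ v)
    {x : X} {t : ℝ} (ht : 0 ≤ t) (hx : spow (p - 1) t ≤ outflow p C φ x) :
    t * (greenRatio p d / (1 - greenRatio p d)) ≤ φ x := by
  have hq := greenRatio_pos (p := p) (by omega : 0 < d)
  have hq1 := greenRatio_lt_one hp hd
  rw [← mul_div_assoc, div_eq_mul_inv, ← tsum_geometric_of_lt_one hq.le hq1, ← tsum_mul_left]
  refine Real.tsum_le_of_sum_range_le (fun k => by positivity) fun K => ?_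
  rw [← mul_sum]
  exact mul_sum_range_le_of_spow_le_outflow hp (by omega) hC hφ hflow K ht hx

end Flow

lemma abs_sum_mul_rpow_le {ι : Type*} (s : Finset ι) {p : ℝ} (hp : 1 ≤ p) {w : ι → ℝ}
    (hw : ∀ i, 0 ≤ w i) (a : ι → ℝ) :
    |∑ i ∈ s, w i * a i| ^ p ≤ (∑ i ∈ s, w i) ^ (p - 1) * ∑ i ∈ s, w i * |a i| ^ p := by
  have hW : 0 ≤ ∑ i ∈ s, w i := sum_nonneg fun i _ => hw i
  have hE : 0 ≤ ∑ i ∈ s, w i * |a i| ^ p := sum_nonneg fun i _ => by have := hw i; positivity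
  calc |∑ i ∈ s, w i * a i| ^ p ≤ (∑ i ∈ s, w i * |a i|) ^ p := by
        refine Real.rpow_le_rpow (abs_nonneg _) ?_ (by linarith)
        refine (abs_sum_le_sum_abs _ _).trans_eq (sum_congr rfl fun i _ => ?_)
        rw [abs_mul, abs_of_nonneg (hw i)]
    _ ≤ ((∑ i ∈ s, w i) ^ (1 - p⁻¹) * (∑ i ∈ s, w i * |a i| ^ p) ^ p⁻¹) ^ p :=
        Real.rpow_le_rpow (sum_nonneg fun i _ => by have := hw i; positivity)
          (Real.inner_le_weight_mul_Lp_of_nonneg s hp w _ hw fun i => abs_nonneg _) (by linarith)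
    _ = (∑ i ∈ s, w i) ^ (p - 1) * ∑ i ∈ s, w i * |a i| ^ p := by
        rw [Real.mul_rpow (by positivity) (by positivity), ← Real.rpow_mul hW, ← Real.rpow_mul hE,
          inv_mul_cancel₀ (by linarith), Real.rpow_one, sub_mul, inv_mul_cancel₀ (by linarith),
          one_mul]

lemma summable_edgeEnergy {X : Type*} {b : X → X → ℝ} (hsymm : ∀ x y, b x y = b y x)
    (hfin : ∀ x, {y | b x y ≠ 0}.Finite) {p : ℝ} (hp : p ≠ 0) {φ : X → ℝ}
    (hφ : (Function.support φ).Finite) :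
    Summable fun z : X × X => b z.1 z.2 * |φ z.1 - φ z.2| ^ p := by
  set N := Function.support φ ∪ ⋃ x ∈ Function.support φ, {y | b x y ≠ 0}
  have hN : N.Finite := hφ.union (hφ.biUnion fun x _ => hfin x)
  refine summable_of_hasFiniteSupport ((hN.prod hN).subset fun z hz => ?_)
  obtain ⟨hb, hφz⟩ := mul_ne_zero_iff.1 hz
  have hne : φ z.1 ≠ φ z.2 := fun h => hφz (by rw [h, sub_self, abs_zero, Real.zero_rpow hp])
  have hbz : b z.2 z.1 ≠ 0 := by rwa [hsymm]
  by_cases h1 : φ z.1 = 0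
  · have h2 : z.2 ∈ Function.support φ := fun h2 => hne (h1.trans h2.symm)
    exact ⟨Or.inr (Set.mem_biUnion h2 hbz), Or.inl h2⟩
  · exact ⟨Or.inl h1, Or.inr (Set.mem_biUnion h1 hb)⟩

structure RegularTree (X : Type*) where
  d : ℕ
  b : X → X → ℝ
  o : X
  ℓ : X → ℕ
  isRegularTree : IsRegularTree d b o ℓ
  degree_pos : 0 < d

namespace RegularTree

variable {X : Type*} (T : RegularTree X)

lemma b_symm (x y : X) : T.b x y = T.b y x := T.isRegularTree.1 x y

lemma b_self (x : X) : T.b x x = 0 := T.isRegularTree.2.1 x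

lemma b_eq_zero_or_one (x y : X) : T.b x y = 0 ∨ T.b x y = 1 := T.isRegularTree.2.2.1 x y

lemma level_root : T.ℓ T.o = 0 := T.isRegularTree.2.2.2.1

lemma ncard_children (x : X) : {y | T.b x y = 1 ∧ T.ℓ y = T.ℓ x + 1}.ncard = T.d :=
  T.isRegularTree.2.2.2.2.1 x

lemma ncard_parents {x : X} (hx : x ≠ T.o) : {y | T.b x y = 1 ∧ T.ℓ y + 1 = T.ℓ x}.ncard = 1 :=
  T.isRegularTree.2.2.2.2.2.1 x hx

lemma level_eq_or_eq_of_b_eq_one {x y : X} (h : T.b x y = 1) :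
    T.ℓ y = T.ℓ x + 1 ∨ T.ℓ x = T.ℓ y + 1 :=
  T.isRegularTree.2.2.2.2.2.2 x y h

lemma finite_setOf_children (x : X) : {y | T.b x y = 1 ∧ T.ℓ y = T.ℓ x + 1}.Finite :=
  Set.finite_of_ncard_ne_zero (by rw [T.ncard_children]; exact T.degree_pos.ne')

def children (x : X) : Finset X := (T.finite_setOf_children x).toFinset

variable {T}

lemma mem_children {x y : X} : y ∈ T.children x ↔ T.b x y = 1 ∧ T.ℓ y = T.ℓ x + 1 := by
  rw [children, Set.Finite.mem_toFinset]
  rfl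

variable (T)

lemma card_children (x : X) : #(T.children x) = T.d := by
  rw [children, ← Set.ncard_eq_toFinset_card _ (T.finite_setOf_children x), ncard_children]

/-- Junk value at the root: `parent o = o`. -/
def parent (x : X) : X :=
  if h : ∃ y, T.b x y = 1 ∧ T.ℓ y + 1 = T.ℓ x then h.choose else x

lemma parent_spec {x : X} (hx : x ≠ T.o) :
    T.b x (T.parent x) = 1 ∧ T.ℓ (T.parent x) + 1 = T.ℓ x := by
  obtain ⟨y, hy⟩ := Set.nonempty_of_ncard_ne_zero (by rw [T.ncard_parents hx]; exact one_ne_zero)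
  have hex : ∃ y, T.b x y = 1 ∧ T.ℓ y + 1 = T.ℓ x := ⟨y, hy⟩
  rw [parent, dif_pos hex]
  exact hex.choose_spec

lemma eq_parent {x y : X} (hx : x ≠ T.o) (h₁ : T.b x y = 1) (h₂ : T.ℓ y + 1 = T.ℓ x) :
    y = T.parent x := by
  obtain ⟨a, ha⟩ := Set.ncard_eq_one.1 (T.ncard_parents hx)
  have hy : y ∈ ({a} : Set X) := ha ▸ ⟨h₁, h₂⟩
  have hpar : T.parent x ∈ ({a} : Set X) := ha ▸ T.parent_spec hx
  exact hy.trans hpar.symm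

lemma parent_root : T.parent T.o = T.o := by
  rw [parent, dif_neg]
  rintro ⟨y, -, hy⟩
  rw [T.level_root] at hy
  omega

lemma level_parent_le (x : X) : T.ℓ (T.parent x) ≤ T.ℓ x := by
  by_cases hx : x = T.o
  · rw [hx, T.parent_root]
  · exact (T.parent_spec hx).2 ▸ Nat.le_succ _

lemma eq_root_of_level_eq_zero {x : X} (h : T.ℓ x = 0) : x = T.o := by
  by_contra hx
  have := (T.parent_spec hx).2
  omega

lemma b_parent (x : X) : T.b x (T.parent x) = if x = T.o then 0 else 1 := by
  split_ifs with hx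
  · rw [hx, T.parent_root, T.b_self]
  · exact (T.parent_spec hx).1

variable {T}

lemma ne_root_of_mem_children {x v : X} (hv : v ∈ T.children x) : v ≠ T.o := by
  rintro rfl
  have := (mem_children.1 hv).2
  rw [T.level_root] at this
  omega

lemma parent_of_mem_children {x v : X} (hv : v ∈ T.children x) : T.parent v = x :=
  (T.eq_parent (ne_root_of_mem_children hv) (by rw [T.b_symm]; exact (mem_children.1 hv).1)
    (mem_children.1 hv).2.symm).symm

lemma mem_children_parent {x : X} (hx : x ≠ T.o) : x ∈ T.children (T.parent x) :=
  mem_children.2 ⟨by rw [T.b_symm]; exact (T.parent_spec hx).1, (T.parent_spec hx).2.symm⟩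

variable (T)

lemma disjoint_children {u v : X} (h : u ≠ v) : Disjoint (T.children u) (T.children v) :=
  disjoint_left.2 fun _ hu hv =>
    h ((parent_of_mem_children hu).symm.trans (parent_of_mem_children hv))

lemma parent_notMem_children (x : X) : T.parent x ∉ T.children x := fun h => by
  have := (mem_children.1 h).2
  have := T.level_parent_le x
  omega

lemma mem_insert_parent_children_of_b_ne_zero {x y : X} (h : T.b x y ≠ 0) :
    y ∈ insert (T.parent x) (T.children x) := by
  have h1 : T.b x y = 1 := (T.b_eq_zero_or_one x y).resolve_left h
  rcases T.level_eq_or_eq_of_b_eq_one h1 with hl | hl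
  · exact mem_insert_of_mem (mem_children.2 ⟨h1, hl⟩)
  · have hx : x ≠ T.o := by
      rintro rfl
      rw [T.level_root] at hl
      omega
    exact T.eq_parent hx h1 hl.symm ▸ mem_insert_self _ _

lemma b_eq_zero_of_notMem {x y : X} (h : y ∉ insert (T.parent x) (T.children x)) :
    T.b x y = 0 :=
  not_not.1 fun h' => h (T.mem_insert_parent_children_of_b_ne_zero h')

lemma tsum_mul_eq (x : X) (g : X → ℝ) :
    ∑' y, T.b x y * g y = T.b x (T.parent x) * g (T.parent x) + ∑ v ∈ T.children x, g v := by
  rw [tsum_eq_sum fun y hy => by rw [T.b_eq_zero_of_notMem hy, zero_mul],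
    sum_insert (T.parent_notMem_children x)]
  exact congrArg _ (sum_congr rfl fun v hv => by rw [(mem_children.1 hv).1, one_mul])

lemma summable_mul (x : X) (g : X → ℝ) : Summable fun y => T.b x y * g y :=
  summable_of_ne_finset_zero fun y hy => by rw [T.b_eq_zero_of_notMem hy, zero_mul]

lemma finite_setOf_b_ne_zero (x : X) : {y | T.b x y ≠ 0}.Finite :=
  (insert (T.parent x) (T.children x)).finite_toSet.subset fun _ hy =>
    T.mem_insert_parent_children_of_b_ne_zero hy

def sphere : ℕ → Finset X
  | 0 => {T.o}
  | k + 1 => (sphere k).biUnion T.children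

variable {T}

lemma mem_sphere {k : ℕ} {x : X} : x ∈ T.sphere k ↔ T.ℓ x = k := by
  induction k generalizing x with
  | zero =>
    rw [sphere, mem_singleton]
    exact ⟨fun h => h ▸ T.level_root, T.eq_root_of_level_eq_zero⟩
  | succ k ih =>
    rw [sphere, mem_biUnion]
    constructor
    · rintro ⟨u, hu, hx⟩
      rw [(mem_children.1 hx).2, ih.1 hu]
    · intro hx
      have hxo : x ≠ T.o := fun h => by rw [h, T.level_root] at hx; omega
      refine ⟨T.parent x, ih.2 ?_, mem_children_parent hxo⟩
      have := (T.parent_spec hxo).2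
      omega

variable (T)

lemma card_sphere (k : ℕ) : #(T.sphere k) = T.d ^ k := by
  induction k with
  | zero => rfl
  | succ k ih =>
    rw [sphere, card_biUnion fun u _ v _ huv => T.disjoint_children huv,
      sum_congr rfl fun u _ => T.card_children u, sum_const, ih, smul_eq_mul, pow_succ]

lemma sum_sphere_succ_parent (f : X → ℝ) (k : ℕ) :
    ∑ v ∈ T.sphere (k + 1), f (T.parent v) = T.d * ∑ u ∈ T.sphere k, f u := by
  rw [sphere, sum_biUnion fun u _ v _ huv => T.disjoint_children huv, mul_sum]
  refine sum_congr rfl fun u _ => ?_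
  rw [sum_congr rfl fun v hv => by rw [parent_of_mem_children hv], sum_const, T.card_children,
    nsmul_eq_mul]

lemma sum_sphere_succ_b {x : X} {k : ℕ} (hx : T.ℓ x = k) :
    ∑ y ∈ T.sphere (k + 1), T.b x y = T.d := by
  have hsub : T.children x ⊆ T.sphere (k + 1) := fun v hv => by
    rw [mem_sphere, (mem_children.1 hv).2, hx]
  rw [← sum_subset hsub fun y hy hyx => T.b_eq_zero_of_notMem ?_,
    sum_congr rfl fun v hv => (mem_children.1 hv).1, sum_const, T.card_children, nsmul_one]
  rw [mem_insert, not_or]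
  refine ⟨fun h => ?_, hyx⟩
  have := T.level_parent_le x
  rw [mem_sphere, h] at hy
  omega

theorem sum_boundary (k : ℕ) :
    (∑' z : X × X, if T.ℓ z.1 = k ∧ T.ℓ z.2 = k + 1 then T.b z.1 z.2 else 0)
      = (T.d : ℝ) ^ (k + 1) := by
  rw [tsum_eq_sum (s := T.sphere k ×ˢ T.sphere (k + 1)) fun z hz => if_neg fun h =>
    hz (mem_product.2 ⟨mem_sphere.2 h.1, mem_sphere.2 h.2⟩), sum_product,
    sum_congr rfl fun x hx => ?_, sum_const, T.card_sphere, nsmul_eq_mul]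
  · push_cast
    ring
  · rw [← T.sum_sphere_succ_b (mem_sphere.1 hx)]
    exact sum_congr rfl fun y hy => if_pos ⟨mem_sphere.1 hx, mem_sphere.1 hy⟩

section Green

variable {p : ℝ}

def green (p : ℝ) (x : X) : ℝ :=
  (T.d : ℝ) ^ (-((T.ℓ x : ℝ) + 1) / (p - 1)) / (1 - (T.d : ℝ) ^ (-(1 : ℝ) / (p - 1)))

lemma green_eq (x : X) :
    T.green p x = greenRatio p T.d ^ (T.ℓ x + 1) / (1 - greenRatio p T.d) := by
  rw [greenRatio_pow, green, greenRatio]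
  push_cast
  rfl

variable {T}

lemma green_pos (hp : 1 < p) (hd : 1 < T.d) (x : X) : 0 < T.green p x := by
  rw [green_eq]
  exact div_pos (pow_pos (greenRatio_pos (by omega)) _) (sub_pos.2 (greenRatio_lt_one hp hd))

lemma green_sub_green_of_mem_children (hp : 1 < p) (hd : 1 < T.d) {x v : X}
    (hv : v ∈ T.children x) : T.green p x - T.green p v = greenRatio p T.d ^ (T.ℓ x + 1) := by
  have := sub_pos.2 (greenRatio_lt_one hp hd)
  rw [green_eq, green_eq, (mem_children.1 hv).2]
  field_simp
  ring

lemma green_sub_green_parent (hp : 1 < p) (hd : 1 < T.d) {x : X} (hx : x ≠ T.o) :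
    T.green p x - T.green p (T.parent x) = -greenRatio p T.d ^ T.ℓ x := by
  have := sub_pos.2 (greenRatio_lt_one hp hd)
  rw [green_eq, green_eq, ← (T.parent_spec hx).2]
  field_simp
  ring

theorem laplacian_green (hp : 1 < p) (hd : 1 < T.d) (x : X) :
    ∑' y, T.b x y * spow (p - 1) (T.green p x - T.green p y) = if x = T.o then 1 else 0 := by
  have hq := greenRatio_pos (p := p) (by omega : 0 < T.d)
  have hd₀ : (T.d : ℝ) ≠ 0 := by positivity
  rw [T.tsum_mul_eq, sum_congr rfl fun v hv => by
      rw [green_sub_green_of_mem_children hp hd hv, spow_of_pos (pow_pos hq _),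
        greenRatio_pow_rpow hp.ne' (by omega)],
    sum_const, T.card_children, nsmul_eq_mul, T.b_parent]
  split_ifs with hx
  · rw [hx, T.level_root]
    field_simp
    ring
  · rw [green_sub_green_parent hp hd hx, spow_neg, spow_of_pos (pow_pos hq _),
      greenRatio_pow_rpow hp.ne' (by omega)]
    field_simp
    ring

/-- Minimality: at `x` with parent `u`, either `φ` drops by at most `q^{|x|}` from `u` to `x`, and
`G(u) ≤ φ(u)` propagates, or the flux `(φ u - φ x)^{p-1}` entering `x` forces
`φ x ≥ (φ u - φ x) q/(1-q) ≥ G(x)`. -/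
theorem green_le (hp : 1 < p) (hd : 1 < T.d) {φ : X → ℝ} (hφ : ∀ x, 0 < φ x)
    (hΔ : ∀ x, ∑' y, T.b x y * spow (p - 1) (φ x - φ y) = if x = T.o then 1 else 0) (x : X) :
    T.green p x ≤ φ x := by
  set q := greenRatio p T.d
  have hq : 0 < q := greenRatio_pos (by omega)
  have hq1 : q < 1 := greenRatio_lt_one hp hd
  have hΔ' : ∀ x, T.b x (T.parent x) * spow (p - 1) (φ x - φ (T.parent x))
      + outflow p T.children φ x = if x = T.o then 1 else 0 := fun x => by
    rw [← hΔ, T.tsum_mul_eq]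
    rfl
  have hroot : outflow p T.children φ T.o = 1 := by simpa [T.b_parent] using hΔ' T.o
  have hinflow : ∀ x ≠ T.o, outflow p T.children φ x = spow (p - 1) (φ (T.parent x) - φ x) :=
    fun x hx => by
      have := hΔ' x
      rw [T.b_parent, if_neg hx, if_neg hx, one_mul, ← neg_sub (φ (T.parent x)), spow_neg] at this
      linarith
  have hbound : ∀ {x t}, 0 ≤ t → spow (p - 1) t ≤ outflow p T.children φ x →
      t * (q / (1 - q)) ≤ φ x :=
    mul_div_le_of_spow_le_outflow hp hd T.card_children (fun x => (hφ x).le) fun x v hv => by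
      rw [hinflow v (ne_root_of_mem_children hv), parent_of_mem_children hv]
  suffices ∀ n x, T.ℓ x = n → T.green p x ≤ φ x from this _ x rfl
  intro n
  induction n with
  | zero =>
    intro x hx
    rw [T.eq_root_of_level_eq_zero hx, green_eq, T.level_root, zero_add, pow_one]
    simpa using hbound zero_le_one (by rw [hroot, spow_of_pos one_pos, Real.one_rpow])
  | succ n ih =>
    intro x hx
    have hxo : x ≠ T.o := fun h => by rw [h, T.level_root] at hx; omega
    have hu : T.ℓ (T.parent x) = n := by have := (T.parent_spec hxo).2; omega
    have hstep := green_sub_green_parent hp hd hxo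
    rcases le_or_gt (φ (T.parent x) - φ x) (q ^ (n + 1)) with hdrop | hdrop
    · rw [hx] at hstep
      linarith [ih _ hu]
    · calc T.green p x = q ^ (n + 1) * (q / (1 - q)) := by
            rw [green_eq, hx]
            ring
        _ ≤ (φ (T.parent x) - φ x) * (q / (1 - q)) :=
            mul_le_mul_of_nonneg_right hdrop.le (div_nonneg hq.le (sub_pos.2 hq1).le)
        _ ≤ φ x := hbound (hdrop.trans' (by positivity)).le (hinflow x hxo).ge

variable (T)

theorem isGreenFunction (hp : 1 < p) (hd : 1 < T.d) :
    IsGreenFunction p T.b (fun _ => 1) 0 T.o (T.green p) := by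
  have hop : ∀ f x, schrodOp p T.b (fun _ => 1) (fun _ => 0) f x
      = ∑' y, T.b x y * spow (p - 1) (f x - f y) := fun f x => by simp [schrodOp, pLap]
  refine ⟨green_pos hp hd, fun x => T.summable_mul x _, fun x => ?_, fun φ _ hφ hφΔ =>
    green_le hp hd hφ fun x => by rw [← hop]; exact hφΔ x⟩
  rw [hop]
  exact laplacian_green hp hd x

end Green

section Hardy

def shell (K : ℕ) : Finset X := (range K).biUnion fun k => T.sphere (k + 1)

lemma sum_shell (K : ℕ) (f : X → ℝ) :
    ∑ v ∈ T.shell K, f v = ∑ k ∈ range K, ∑ v ∈ T.sphere (k + 1), f v :=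
  sum_biUnion fun j _ k _ hjk => disjoint_left.2 fun x hj hk => hjk <| by
    have := mem_sphere.1 hj
    have := mem_sphere.1 hk
    omega

lemma root_notMem_shell (K : ℕ) : T.o ∉ T.shell K := by
  simp [shell, mem_sphere, T.level_root]

theorem apply_root_eq_sum_shell {φ : X → ℝ} {K : ℕ} (hK : ∀ x, K ≤ T.ℓ x → φ x = 0) :
    φ T.o = ∑ v ∈ T.shell K, ((T.d : ℝ) ^ T.ℓ v)⁻¹ * (φ (T.parent v) - φ v) := by
  have hd₀ : (T.d : ℝ) ≠ 0 := Nat.cast_ne_zero.2 T.degree_pos.ne'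
  set A : ℕ → ℝ := fun k => ((T.d : ℝ) ^ k)⁻¹ * ∑ x ∈ T.sphere k, φ x
  have hA₀ : A 0 = φ T.o := by simp [A, sphere]
  have hA_K : A K = 0 := by
    simp only [A]
    rw [sum_eq_zero fun x hx => hK x (mem_sphere.1 hx).ge, mul_zero]
  have hstep : ∀ k, A k - A (k + 1)
      = ∑ v ∈ T.sphere (k + 1), ((T.d : ℝ) ^ T.ℓ v)⁻¹ * (φ (T.parent v) - φ v) := fun k => by
    rw [sum_congr rfl fun v hv => by rw [mem_sphere.1 hv], ← mul_sum, sum_sub_distrib,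
      T.sum_sphere_succ_parent]
    simp only [A]
    field_simp
    ring
  rw [T.sum_shell, ← sum_congr rfl fun k _ => hstep k, sum_range_sub', hA₀, hA_K, sub_zero]

variable {p : ℝ}

theorem abs_root_rpow_le (hp : 1 < p) (hd : 1 < T.d) {φ : X → ℝ} {K : ℕ}
    (hK : ∀ x, K ≤ T.ℓ x → φ x = 0) :
    |φ T.o| ^ p ≤ (greenRatio p T.d / (1 - greenRatio p T.d)) ^ (p - 1)
      * ∑ v ∈ T.shell K, |φ (T.parent v) - φ v| ^ p := by
  set q := greenRatio p T.d
  have hq : 0 < q := greenRatio_pos (by omega)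
  have hd₀ : (0 : ℝ) < T.d := by positivity
  set w : X → ℝ := fun v => (q / T.d) ^ T.ℓ v
  set a : X → ℝ := fun v => (φ (T.parent v) - φ v) / q ^ T.ℓ v
  have hw : ∀ v, 0 ≤ w v := fun v => by positivity
  have hwa : φ T.o = ∑ v ∈ T.shell K, w v * a v := by
    rw [T.apply_root_eq_sum_shell hK]
    refine sum_congr rfl fun v _ => ?_
    simp only [w, a, div_pow]
    field_simp
  have hwa_p : ∀ v, w v * |a v| ^ p = |φ (T.parent v) - φ v| ^ p := fun v => by
    have hqv : 0 < q ^ T.ℓ v := pow_pos hq _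
    simp only [w, a]
    have hpow : (q ^ T.ℓ v) ^ p = ((T.d : ℝ) ^ T.ℓ v)⁻¹ * q ^ T.ℓ v := by
      rw [← greenRatio_pow_rpow hp.ne' (by omega), Real.rpow_sub_one hqv.ne',
        div_mul_cancel₀ _ hqv.ne']
    rw [abs_div, abs_of_pos hqv, Real.div_rpow (abs_nonneg _) hqv.le, hpow, div_pow]
    field_simp
  have hw_sum : ∑ v ∈ T.shell K, w v ≤ q / (1 - q) := by
    rw [T.sum_shell]
    refine (sum_le_sum fun k _ => le_of_eq ?_).trans (sum_range_greenRatio_pow_le hp hd K)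
    rw [sum_congr rfl fun v hv => by simp only [w]; rw [mem_sphere.1 hv], sum_const,
      T.card_sphere, nsmul_eq_mul, div_pow]
    push_cast
    field_simp
    rfl
  rw [hwa, ← sum_congr rfl fun v _ => hwa_p v]
  refine (abs_sum_mul_rpow_le _ hp.le hw a).trans ?_
  gcongr

lemma sum_parent_le_half_tsum {g : X × X → ℝ} (hg : ∀ z, 0 ≤ g z) (hgs : Summable g)
    (hsymm : ∀ x y, g (x, y) = g (y, x)) {F : Finset X} (hF : T.o ∉ F) :
    ∑ v ∈ F, g (v, T.parent v) ≤ (1 / 2) * ∑' z, g z := by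
  have hup : ∑ v ∈ F, g (v, T.parent v) = ∑ z ∈ F.image fun v => (v, T.parent v), g z :=
    (sum_image fun _ _ _ _ h => congrArg Prod.fst h).symm
  have hdown : ∑ v ∈ F, g (v, T.parent v) = ∑ z ∈ F.image fun v => (T.parent v, v), g z := by
    rw [sum_image fun _ _ _ _ h => congrArg Prod.snd h]
    exact sum_congr rfl fun v _ => hsymm _ _
  have hdisj : Disjoint (F.image fun v => (v, T.parent v)) (F.image fun v => (T.parent v, v)) := by
    simp only [disjoint_left, mem_image, not_exists, not_and]
    rintro _ ⟨v, hv, rfl⟩ w hw hwv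
    obtain ⟨hpw, hw_eq⟩ := Prod.mk.inj hwv
    have hv_lvl := (T.parent_spec (ne_of_mem_of_not_mem hv hF)).2
    have hw_lvl := (T.parent_spec (ne_of_mem_of_not_mem hw hF)).2
    rw [hpw] at hw_lvl
    rw [← hw_eq] at hv_lvl
    omega
  have := hgs.sum_le_tsum ((F.image fun v => (v, T.parent v)) ∪ F.image fun v => (T.parent v, v))
    fun z _ => hg z
  rw [sum_union hdisj, ← hup, ← hdown] at this
  linarith

theorem subcritical (hp : 1 < p) (hd : 1 < T.d) :
    pSubcritical p T.b (fun _ => 1) (fun _ => 0) := by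
  set M := greenRatio p T.d / (1 - greenRatio p T.d)
  have hM : 0 < M := div_pos (greenRatio_pos (by omega)) (sub_pos.2 (greenRatio_lt_one hp hd))
  refine ⟨fun x => if x = T.o then (M ^ (p - 1))⁻¹ else 0, fun x => by positivity,
    fun h => (inv_pos.2 (Real.rpow_pos_of_pos hM (p - 1))).ne' (by simpa using congrFun h T.o),
    fun φ hφ => ?_⟩
  obtain ⟨K, hK⟩ : ∃ K, ∀ x, K ≤ T.ℓ x → φ x = 0 := by
    obtain ⟨N, hN⟩ := (hφ.image T.ℓ).bddAbove
    exact ⟨N + 1, fun x hx => by_contra fun h => by have := hN ⟨x, h, rfl⟩; omega⟩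
  set g : X × X → ℝ := fun z => T.b z.1 z.2 * |φ z.1 - φ z.2| ^ p
  have hedges := T.sum_parent_le_half_tsum (g := g)
    (fun z => mul_nonneg ((T.b_eq_zero_or_one _ _).elim (·.ge) (· ▸ zero_le_one)) (by positivity))
    (summable_edgeEnergy T.b_symm T.finite_setOf_b_ne_zero (by linarith) hφ)
    (fun x y => by simp only [g]; rw [T.b_symm, abs_sub_comm]) (T.root_notMem_shell K)
  rw [sum_congr rfl fun v hv => by
      simp only [g]
      rw [T.b_parent, if_neg (ne_of_mem_of_not_mem hv (T.root_notMem_shell K)), one_mul,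
        abs_sub_comm]] at hedges
  have hHardy := T.abs_root_rpow_le hp hd hK
  have hpot : ∑' x, (1 : ℝ) * (0 - if x = T.o then (M ^ (p - 1))⁻¹ else 0) * |φ x| ^ p
      = -((M ^ (p - 1))⁻¹ * |φ T.o| ^ p) := by
    rw [tsum_eq_single T.o fun x hx => by simp [hx]]
    simp
  rw [pEnergy, hpot, ← sub_eq_add_neg, sub_nonneg, inv_mul_le_iff₀ (by positivity)]
  exact hHardy.trans (mul_le_mul_of_nonneg_left hedges (by positivity))

end Hardy

end RegularTree

theorem regular_tree_green_general
    {X : Type}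
    (p : ℝ) (hp : 1 < p) (d : ℕ) (hd : 2 ≤ d)
    (b : X → X → ℝ) (o : X) (ℓ : X → ℕ) (htree : IsRegularTree d b o ℓ) :
    (∀ k : ℕ,
      (∑' z : X × X, if ℓ z.1 = k ∧ ℓ z.2 = k + 1 then b z.1 z.2 else 0)
        = (d : ℝ) ^ (k + 1)) ∧
    pSubcritical p b (fun _ => 1) (fun _ => 0) ∧
    IsGreenFunction p b (fun _ => 1) 0 o
      (fun x => (d : ℝ) ^ (-((ℓ x : ℝ) + 1) / (p - 1))
        / (1 - (d : ℝ) ^ (-(1 : ℝ) / (p - 1)))) :=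
  let T : RegularTree X := ⟨d, b, o, ℓ, htree, by omega⟩
  ⟨T.sum_boundary, T.subcritical hp hd, T.isGreenFunction hp hd⟩

/-- the Green function of the `d`-regular tree. -/
theorem regular_tree_green
    {X : Type} [Countable X] [Infinite X]
    (p : ℝ) (hp : 1 < p) (d : ℕ) (hd : 2 ≤ d)
    (b : X → X → ℝ) (o : X) (ℓ : X → ℕ) (htree : IsRegularTree d b o ℓ) :
    (∀ k : ℕ,
      (∑' z : X × X, if ℓ z.1 = k ∧ ℓ z.2 = k + 1 then b z.1 z.2 else 0)
        = (d : ℝ) ^ (k + 1)) ∧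
    pSubcritical p b (fun _ => 1) (fun _ => 0) ∧
    IsGreenFunction p b (fun _ => 1) 0 o
      (fun x => (d : ℝ) ^ (-((ℓ x : ℝ) + 1) / (p - 1))
        / (1 - (d : ℝ) ^ (-(1 : ℝ) / (p - 1)))) :=
  regular_tree_green_general p hp d hd b o ℓ htree
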